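/- arXiv:2004.01285 — 5 statements merged into one kernel-verified Lean document; each statement's English description precedes it below -/
import Mathlib

section
/- Suppose m ≥ 2 is an integer and (p_n) is a sequence of primes satisfying p_n^m < p_{n+1} < (p_n + 1)^m - 1 for all n ≥ 1. Then the sequence α_n = p_n^(m^{-n}) is strictly increasing and the sequence β_n = (p_n + 1)^(m^{-n}) is strictly decreasing, and α_n < β_k for all n, k. -/
/-! Raising to the power `m^(n+1)` turns `α_n < α_{n+1}` into `p_n^m < p_{n+1}` and
`β_{n+1} < β_n` into `p_{n+1} + 1 < (p_n + 1)^m`, which are the two halves of the recursion.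
Since `α_k < β_k` trivially, monotonicity of `α` and antitonicity of `β` give `α_n < β_k`
by comparing both with index `max n k`. -/

namespace Real

lemma rpow_inv_eq_pow_rpow_inv_mul {x k : ℝ} {m : ℕ} (hx : 0 ≤ x) (hm : m ≠ 0) :
    x ^ k⁻¹ = (x ^ m) ^ (k * m)⁻¹ := by
  rw [← rpow_natCast, ← rpow_mul hx, mul_inv, mul_left_comm,
    mul_inv_cancel₀ (Nat.cast_ne_zero.2 hm), mul_one]

lemma rpow_inv_lt_rpow_inv_mul_of_pow_lt {x y k : ℝ} {m : ℕ} (hx : 0 ≤ x) (hk : 0 < k)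
    (hm : m ≠ 0) (h : x ^ m < y) : x ^ k⁻¹ < y ^ (k * m)⁻¹ := by
  rw [rpow_inv_eq_pow_rpow_inv_mul hx hm]
  exact rpow_lt_rpow (by positivity) h (by positivity)

lemma rpow_inv_mul_lt_rpow_inv_of_lt_pow {x y k : ℝ} {m : ℕ} (hx : 0 ≤ x) (hy : 0 ≤ y)
    (hk : 0 < k) (hm : m ≠ 0) (h : y < x ^ m) : y ^ (k * m)⁻¹ < x ^ k⁻¹ := by
  rw [rpow_inv_eq_pow_rpow_inv_mul hx hm]
  exact rpow_lt_rpow hy h (by positivity)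

end Real

lemma lt_of_monotoneOn_of_antitoneOn {α : Type*} [LinearOrder α] {a b : ℕ → α} {s : Set ℕ}
    (ha : MonotoneOn a s) (hb : AntitoneOn b s) (hab : ∀ n, a n < b n) {n k : ℕ}
    (hn : n ∈ s) (hk : k ∈ s) : a n < b k := by
  rcases le_total n k with hnk | hkn
  · exact (ha hn hk hnk).trans_lt (hab k)
  · exact (hab n).trans_le (hb hk hn hkn)

theorem stmt_2_general (m : ℕ) (hm : 2 ≤ m) (p : ℕ → ℕ)
    (hrec : ∀ n : ℕ, 1 ≤ n → (p n) ^ m < p (n + 1) ∧ p (n + 1) < (p n + 1) ^ m - 1) :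
    (∀ n : ℕ, 1 ≤ n →
      (p n : ℝ) ^ (((m : ℝ) ^ n)⁻¹) < (p (n + 1) : ℝ) ^ (((m : ℝ) ^ (n + 1))⁻¹)) ∧
    (∀ n : ℕ, 1 ≤ n →
      ((p (n + 1) : ℝ) + 1) ^ (((m : ℝ) ^ (n + 1))⁻¹) < ((p n : ℝ) + 1) ^ (((m : ℝ) ^ n)⁻¹)) ∧
    (∀ n k : ℕ, 1 ≤ n → 1 ≤ k →
      (p n : ℝ) ^ (((m : ℝ) ^ n)⁻¹) < ((p k : ℝ) + 1) ^ (((m : ℝ) ^ k)⁻¹)) := by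
  have hm0 : m ≠ 0 := by omega
  have hpow (n : ℕ) : (0 : ℝ) < (m : ℝ) ^ n := by positivity
  have hα (n : ℕ) (hn : 1 ≤ n) :
      (p n : ℝ) ^ (((m : ℝ) ^ n)⁻¹) < (p (n + 1) : ℝ) ^ (((m : ℝ) ^ (n + 1))⁻¹) := by
    rw [pow_succ]
    exact Real.rpow_inv_lt_rpow_inv_mul_of_pow_lt (by positivity) (hpow n) hm0
      (by exact_mod_cast (hrec n hn).1)
  have hβ (n : ℕ) (hn : 1 ≤ n) :
      ((p (n + 1) : ℝ) + 1) ^ (((m : ℝ) ^ (n + 1))⁻¹) < ((p n : ℝ) + 1) ^ (((m : ℝ) ^ n)⁻¹) := by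
    have h : p (n + 1) + 1 < (p n + 1) ^ m := by have := (hrec n hn).2; omega
    rw [pow_succ]
    exact Real.rpow_inv_mul_lt_rpow_inv_of_lt_pow (by positivity) (by positivity) (hpow n) hm0
      (by exact_mod_cast h)
  have hαβ (n : ℕ) : (p n : ℝ) ^ (((m : ℝ) ^ n)⁻¹) < ((p n : ℝ) + 1) ^ (((m : ℝ) ^ n)⁻¹) :=
    Real.rpow_lt_rpow (by positivity) (lt_add_one _) (inv_pos.2 (hpow n))
  refine ⟨hα, hβ, fun n k hn hk => ?_⟩
  exact lt_of_monotoneOn_of_antitoneOn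
    (monotoneOn_nat_Ici_of_le_succ fun j hj => (hα j hj).le)
    (antitoneOn_nat_Ici_of_succ_le fun j hj => (hβ j hj).le) hαβ
    (Set.mem_Ici.2 hn) (Set.mem_Ici.2 hk)

theorem stmt_2 (m : ℕ) (hm : 2 ≤ m) (p : ℕ → ℕ)
    (hp : ∀ n : ℕ, 1 ≤ n → (p n).Prime)
    (hrec : ∀ n : ℕ, 1 ≤ n → (p n) ^ m < p (n + 1) ∧ p (n + 1) < (p n + 1) ^ m - 1) :
    (∀ n : ℕ, 1 ≤ n →
      (p n : ℝ) ^ (((m : ℝ) ^ n)⁻¹) < (p (n + 1) : ℝ) ^ (((m : ℝ) ^ (n + 1))⁻¹)) ∧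
    (∀ n : ℕ, 1 ≤ n →
      ((p (n + 1) : ℝ) + 1) ^ (((m : ℝ) ^ (n + 1))⁻¹) < ((p n : ℝ) + 1) ^ (((m : ℝ) ^ n)⁻¹)) ∧
    (∀ n k : ℕ, 1 ≤ n → 1 ≤ k →
      (p n : ℝ) ^ (((m : ℝ) ^ n)⁻¹) < ((p k : ℝ) + 1) ^ (((m : ℝ) ^ k)⁻¹)) :=
  stmt_2_general m hm p hrec
end

section
/- Suppose m ≥ 2 is an integer and (p_n) is a sequence of primes with p_n^m < p_{n+1} < (p_n + 1)^m - 1 for all n ≥ 1. Then the limit A = lim_{n→∞} p_n^(m^{-n}) exists, and for every n ≥ 1 we have ⌊A^(m^n)⌋ = p_n. -/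
/-!
Write `a n = p_n ^ (m^{-n})` and `b n = (p_n + 1) ^ (m^{-n})`. Taking `m^{n+1}`-th roots of
`p_n^m < p_{n+1}` and `p_{n+1} + 1 < (p_n + 1)^m` shows that `a` increases and `b` strictly decreases,
so the intervals `[a n, b n)` are nested and `A = sup a` lies in all of them. Raising
`a n ≤ A < b n` to the power `m^n` gives `p_n ≤ A^(m^n) < p_n + 1`.
-/

open Filter Topology

lemma exists_tendsto_of_monotone_of_strictAnti {a b : ℕ → ℝ} (ha : Monotone a)
    (hb : StrictAnti b) (hab : ∀ n, a n ≤ b n) :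
    ∃ A, Tendsto a atTop (𝓝 A) ∧ ∀ n, a n ≤ A ∧ A < b n := by
  have hle : ∀ k n, a k ≤ b n := fun k n =>
    calc a k ≤ a (max k n) := ha (le_max_left k n)
      _ ≤ b (max k n) := hab _
      _ ≤ b n := hb.antitone (le_max_right k n)
  have hbdd : BddAbove (Set.range a) := ⟨b 0, Set.forall_mem_range.2 fun k => hle k 0⟩
  refine ⟨⨆ k, a k, tendsto_atTop_ciSup ha hbdd, fun n => ⟨le_ciSup hbdd n, ?_⟩⟩
  exact (ciSup_le fun k => hle k (n + 1)).trans_lt (hb (Nat.lt_succ_self n))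

namespace Real

variable {m : ℕ}

lemma pow_rpow_inv_pow_succ (hm : 0 < m) {x : ℝ} (hx : 0 ≤ x) (n : ℕ) :
    (x ^ m) ^ ((m : ℝ) ^ (n + 1))⁻¹ = x ^ ((m : ℝ) ^ n)⁻¹ := by
  have hm' : (m : ℝ) ≠ 0 := by positivity
  rw [← rpow_natCast x m, ← rpow_mul hx, pow_succ, mul_inv, mul_left_comm,
    mul_inv_cancel₀ hm', mul_one]

lemma rpow_inv_pow_le_rpow_inv_pow_succ (hm : 0 < m) {x y : ℝ} (hx : 0 ≤ x) (h : x ^ m ≤ y)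
    (n : ℕ) : x ^ ((m : ℝ) ^ n)⁻¹ ≤ y ^ ((m : ℝ) ^ (n + 1))⁻¹ := by
  rw [← pow_rpow_inv_pow_succ hm hx]
  exact rpow_le_rpow (by positivity) h (by positivity)

lemma rpow_inv_pow_succ_lt_rpow_inv_pow (hm : 0 < m) {x y : ℝ} (hx : 0 ≤ x) (hy : 0 ≤ y)
    (h : y < x ^ m) (n : ℕ) : y ^ ((m : ℝ) ^ (n + 1))⁻¹ < x ^ ((m : ℝ) ^ n)⁻¹ := by
  rw [← pow_rpow_inv_pow_succ hm hx]
  exact rpow_lt_rpow hy h (by positivity)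

end Real

lemma Int.floor_pow_eq_of_rpow_inv_le_of_lt_rpow_inv {N k : ℕ} (hN : 0 < N) {A : ℝ}
    (hk : (k : ℝ) ^ (N : ℝ)⁻¹ ≤ A) (hk' : A < ((k : ℝ) + 1) ^ (N : ℝ)⁻¹) :
    ⌊A ^ N⌋ = k := by
  have hA : 0 ≤ A := (Real.rpow_nonneg k.cast_nonneg _).trans hk
  have hN' : (0 : ℝ) < N := by exact_mod_cast hN
  rw [Real.rpow_inv_le_iff_of_pos k.cast_nonneg hA hN', Real.rpow_natCast] at hk
  rw [Real.lt_rpow_inv_iff_of_pos hA (by positivity) hN', Real.rpow_natCast] at hk'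
  rw [Int.floor_eq_iff]
  push_cast
  exact ⟨hk, hk'⟩

theorem stmt_3_general (m : ℕ) (hm : 2 ≤ m) (p : ℕ → ℕ)
    (hrec : ∀ n : ℕ, 1 ≤ n → (p n) ^ m < p (n + 1) ∧ p (n + 1) < (p n + 1) ^ m - 1) :
    ∃ A : ℝ, Filter.Tendsto (fun n : ℕ => (p n : ℝ) ^ (((m : ℝ) ^ n)⁻¹))
        Filter.atTop (nhds A) ∧
      ∀ n : ℕ, 1 ≤ n → ⌊A ^ (m ^ n : ℕ)⌋ = (p n : ℤ) := by
  have hm0 : 0 < m := by omega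
  have hlow (n : ℕ) : ((p (n + 1) : ℝ)) ^ m ≤ p (n + 2) := by
    exact_mod_cast (hrec (n + 1) n.succ_pos).1.le
  have hup (n : ℕ) : (p (n + 2) : ℝ) + 1 < ((p (n + 1) : ℝ) + 1) ^ m := by
    exact_mod_cast Nat.add_lt_of_lt_sub (hrec (n + 1) n.succ_pos).2
  obtain ⟨A, hlim, hA⟩ := exists_tendsto_of_monotone_of_strictAnti
    (a := fun n => (p (n + 1) : ℝ) ^ ((m : ℝ) ^ (n + 1))⁻¹)
    (b := fun n => ((p (n + 1) : ℝ) + 1) ^ ((m : ℝ) ^ (n + 1))⁻¹)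
    (monotone_nat_of_le_succ fun n =>
      Real.rpow_inv_pow_le_rpow_inv_pow_succ hm0 (by positivity) (hlow n) _)
    (strictAnti_nat_of_succ_lt fun n =>
      Real.rpow_inv_pow_succ_lt_rpow_inv_pow hm0 (by positivity) (by positivity) (hup n) _)
    (fun n => Real.rpow_le_rpow (by positivity) (by linarith) (by positivity))
  refine ⟨A, (tendsto_add_atTop_iff_nat 1).1 hlim, fun n hn => ?_⟩
  obtain ⟨k, rfl⟩ : ∃ k, n = k + 1 := ⟨n - 1, by omega⟩
  exact Int.floor_pow_eq_of_rpow_inv_le_of_lt_rpow_inv (by positivity)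
    (by simpa using (hA k).1) (by simpa using (hA k).2)

theorem stmt_3 (m : ℕ) (hm : 2 ≤ m) (p : ℕ → ℕ)
    (hp : ∀ n : ℕ, 1 ≤ n → (p n).Prime)
    (hrec : ∀ n : ℕ, 1 ≤ n → (p n) ^ m < p (n + 1) ∧ p (n + 1) < (p n + 1) ^ m - 1) :
    ∃ A : ℝ, Filter.Tendsto (fun n : ℕ => (p n : ℝ) ^ (((m : ℝ) ^ n)⁻¹))
        Filter.atTop (nhds A) ∧
      ∀ n : ℕ, 1 ≤ n → ⌊A ^ (m ^ n : ℕ)⌋ = (p n : ℤ) :=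
  stmt_3_general m hm p hrec
end

section
/- Assume that for every integer n ≥ 1 there is a prime strictly between n^m and (n+1)^m, where m ≥ 2 is a fixed integer. Then for every prime q there exists a real constant A > 1 with ⌊A^m⌋ = q such that ⌊A^(m^n)⌋ is prime for all integers n ≥ 1. -/
/-!
Starting from `q`, the hypothesis lets us choose primes `p₀ = q` and `pₙ₊₁ ∈ (pₙ ^ m, (pₙ + 1) ^ m)`;
in fact `pₙ₊₁ + 1 < (pₙ + 1) ^ m`, since `(pₙ + 1) ^ m - 1` is a proper multiple of `pₙ`.
Taking `m ^ (n + 1)`-th roots, the intervals `[pₙ, pₙ + 1)` become nested intervals whose left ends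
increase and whose right ends strictly decrease, so the supremum `A` of the left ends satisfies
`pₙ ≤ A ^ m ^ (n + 1) < pₙ + 1` for every `n`.
-/

open Set

theorem exists_mem_Ico_of_monotone_of_strictAnti {u v : ℕ → ℝ} (hu : Monotone u)
    (hv : StrictAnti v) (huv : ∀ n, u n < v n) : ∃ A, ∀ n, A ∈ Ico (u n) (v n) := by
  have hA := hu.ciSup_mem_iInter_Icc_of_antitone hv.antitone fun n => (huv n).le
  refine ⟨⨆ n, u n, fun n => ⟨(mem_iInter.1 hA n).1, ?_⟩⟩
  exact (mem_iInter.1 hA (n + 1)).2.trans_lt (hv n.lt_succ_self)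

theorem exists_pow_pow_succ_mem_Ico {m : ℕ} (hm : m ≠ 0) {a b : ℕ → ℝ} (ha : ∀ n, 0 ≤ a n)
    (hab : ∀ n, a n < b n) (ha_succ : ∀ n, a n ^ m ≤ a (n + 1))
    (hb_succ : ∀ n, b (n + 1) < b n ^ m) :
    ∃ A : ℝ, 0 ≤ A ∧ ∀ n, A ^ m ^ (n + 1) ∈ Ico (a n) (b n) := by
  have hM (n : ℕ) : m ^ (n + 1) ≠ 0 := pow_ne_zero _ hm
  have hb (n : ℕ) : 0 ≤ b n := (ha n).trans (hab n).le
  set u : ℕ → ℝ := fun n => a n ^ ((m ^ (n + 1) : ℕ) : ℝ)⁻¹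
  set v : ℕ → ℝ := fun n => b n ^ ((m ^ (n + 1) : ℕ) : ℝ)⁻¹
  have hu (n : ℕ) : 0 ≤ u n := Real.rpow_nonneg (ha n) _
  have hv (n : ℕ) : 0 ≤ v n := Real.rpow_nonneg (hb n) _
  have hu_pow (n : ℕ) : u n ^ m ^ (n + 1) = a n := Real.rpow_inv_natCast_pow (ha n) (hM n)
  have hv_pow (n : ℕ) : v n ^ m ^ (n + 1) = b n := Real.rpow_inv_natCast_pow (hb n) (hM n)
  have hu_mono : Monotone u := monotone_nat_of_le_succ fun n => by
    rw [← pow_le_pow_iff_left₀ (hu n) (hu (n + 1)) (hM (n + 1)), hu_pow, pow_succ, pow_mul,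
      hu_pow]
    exact ha_succ n
  have hv_anti : StrictAnti v := strictAnti_nat_of_succ_lt fun n => by
    rw [← pow_lt_pow_iff_left₀ (hv (n + 1)) (hv n) (hM (n + 1)), hv_pow, pow_succ, pow_mul,
      hv_pow]
    exact hb_succ n
  have huv (n : ℕ) : u n < v n := by
    rw [← pow_lt_pow_iff_left₀ (hu n) (hv n) (hM n), hu_pow, hv_pow]
    exact hab n
  obtain ⟨A, hA⟩ := exists_mem_Ico_of_monotone_of_strictAnti hu_mono hv_anti huv
  have hA0 : 0 ≤ A := (hu 0).trans (hA 0).1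
  refine ⟨A, hA0, fun n => ⟨?_, ?_⟩⟩
  · exact hu_pow n ▸ pow_le_pow_left₀ (hu n) (hA n).1 _
  · exact hv_pow n ▸ pow_lt_pow_left₀ (hA n).2 hA0 (hM n)

theorem exists_floor_pow_pow_succ_eq {m : ℕ} (hm : m ≠ 0) {P : ℕ → ℕ}
    (hle : ∀ n, P n ^ m ≤ P (n + 1)) (hlt : ∀ n, P (n + 1) + 1 < (P n + 1) ^ m) :
    ∃ A : ℝ, 0 ≤ A ∧ ∀ n, ⌊A ^ m ^ (n + 1)⌋ = P n := by
  obtain ⟨A, hA0, hA⟩ := exists_pow_pow_succ_mem_Ico hm (a := fun n => (P n : ℝ))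
    (b := fun n => (P n : ℝ) + 1) (fun n => Nat.cast_nonneg _) (fun n => lt_add_one _)
    (fun n => mod_cast hle n) (fun n => mod_cast hlt n)
  exact ⟨A, hA0, fun n => Int.floor_eq_iff.2 (mod_cast hA n)⟩

theorem Nat.not_prime_add_one_pow_sub_one {m p : ℕ} (hm : 2 ≤ m) (hp : 2 ≤ p) :
    ¬ ((p + 1) ^ m - 1).Prime := by
  have hdvd : p ∣ (p + 1) ^ m - 1 := by
    simpa using Nat.sub_dvd_pow_sub_pow (p + 1) 1 m
  have hlt : p + 1 < (p + 1) ^ m := lt_self_pow₀ (by omega) (by omega)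
  exact Nat.not_prime_of_dvd_of_lt hdvd hp (by omega)

theorem exists_prime_seq_of_prime_between_pow {m : ℕ}
    (h : ∀ n : ℕ, 1 ≤ n → ∃ p : ℕ, p.Prime ∧ n ^ m < p ∧ p < (n + 1) ^ m) {q : ℕ}
    (hq : q.Prime) : ∃ P : ℕ → ℕ, P 0 = q ∧
      ∀ n, (P n).Prime ∧ P n ^ m < P (n + 1) ∧ P (n + 1) < (P n + 1) ^ m := by
  choose! next hnext using fun p (hp : p.Prime) => h p hp.one_lt.le
  have hprime (n : ℕ) : (next^[n] q).Prime := by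
    induction n with
    | zero => exact hq
    | succ n ih => exact Function.iterate_succ_apply' next n q ▸ (hnext _ ih).1
  refine ⟨fun n => next^[n] q, rfl, fun n => ⟨hprime n, ?_⟩⟩
  simpa only [Function.iterate_succ_apply'] using (hnext _ (hprime n)).2

theorem stmt_4 (m : ℕ) (hm : 2 ≤ m)
    (h : ∀ n : ℕ, 1 ≤ n → ∃ p : ℕ, p.Prime ∧ n ^ m < p ∧ p < (n + 1) ^ m) :
    ∀ q : ℕ, q.Prime → ∃ A : ℝ, 1 < A ∧ ⌊A ^ m⌋ = (q : ℤ) ∧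
      ∀ n : ℕ, 1 ≤ n → Prime ⌊A ^ (m ^ n : ℕ)⌋ := by
  intro q hq
  obtain ⟨P, hP0, hP⟩ := exists_prime_seq_of_prime_between_pow h hq
  have hlt (n : ℕ) : P (n + 1) + 1 < (P n + 1) ^ m := by
    have hne : P (n + 1) ≠ (P n + 1) ^ m - 1 := fun he =>
      Nat.not_prime_add_one_pow_sub_one hm (hP n).1.two_le (he ▸ (hP (n + 1)).1)
    have := (hP n).2.2
    omega
  obtain ⟨A, hA0, hA⟩ := exists_floor_pow_pow_succ_eq (by omega) (fun n => (hP n).2.1.le) hlt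
  have hAq : ⌊A ^ m⌋ = q := by simpa [hP0] using hA 0
  refine ⟨A, ?_, hAq, fun n hn => ?_⟩
  · have hqA : (q : ℝ) ≤ A ^ m := by simpa [hAq] using Int.floor_le (A ^ m)
    rw [← one_lt_pow_iff_of_nonneg hA0 (by omega : m ≠ 0)]
    exact (Nat.one_lt_cast.2 hq.one_lt).trans_le hqA
  · obtain ⟨k, rfl⟩ := Nat.exists_eq_add_of_le' hn
    rw [hA k]
    exact Nat.prime_iff_prime_int.mp (hP k).1
end

section
/- Suppose m ≥ 2 and (p_n) is a sequence of primes with p_n^m < p_{n+1} < (p_n+1)^m for all n ≥ 1, and let A = lim_{n→∞} p_n^(m^{-n}). Then for all n, p_n^(m^{-n}) < A < (p_n + 1)^(m^{-n}). -/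
/-!
Write `α n = p_n ^ (m⁻ⁿ)` and `β n = (p_n + 1) ^ (m⁻ⁿ)`. Taking `m^(n+1)`-th roots in
`p_n ^ m < p_{n+1}` and `p_{n+1} + 1 ≤ (p_n + 1) ^ m` shows that `α` increases and `β` decreases,
and `α n < β n` throughout, so the limit `A` of `α` lies strictly between them. The decrease of
`β` is strict because equality would make the prime `p_{n+1} = (p_n + 1) ^ m - 1` divisible by `p_n`.
-/

open Filter Topology

theorem Nat.Prime.add_one_lt_add_one_pow {q a m : ℕ} (hq : q.Prime) (ha : 2 ≤ a) (haq : a < q)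
    (hlt : q < (a + 1) ^ m) : q + 1 < (a + 1) ^ m := by
  refine lt_of_le_of_ne hlt fun heq => ?_
  have hdvd : a ∣ q := by
    simpa [← heq] using Nat.sub_one_dvd_pow_sub_one (a + 1) m
  rcases hq.eq_one_or_self_of_dvd a hdvd with h | h <;> omega

theorem StrictMono.lt_of_tendsto {α : Type*} [TopologicalSpace α] [Preorder α]
    [OrderClosedTopology α] {f : ℕ → α} {A : α} (hf : StrictMono f)
    (hA : Tendsto f atTop (𝓝 A)) (k : ℕ) : f k < A :=
  (hf k.lt_succ_self).trans_le (hf.monotone.ge_of_tendsto hA _)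

theorem lt_of_tendsto_of_le_of_strictAnti {α : Type*} [TopologicalSpace α] [Preorder α]
    [OrderClosedTopology α] {f g : ℕ → α} {A : α} (hA : Tendsto f atTop (𝓝 A))
    (hfg : ∀ k, f k ≤ g k) (hg : StrictAnti g) (k : ℕ) : A < g k := by
  have hle : A ≤ g (k + 1) :=
    le_of_tendsto hA (eventually_atTop.2 ⟨k + 1, fun j hj => (hfg j).trans (hg.antitone hj)⟩)
  exact hle.trans_lt (hg k.lt_succ_self)

section Roots

variable {m : ℕ} {x y : ℝ}

theorem rpow_inv_pow_succ_of_pow (hm : m ≠ 0) (hx : 0 ≤ x) (n : ℕ) :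
    (x ^ m) ^ ((m : ℝ) ^ (n + 1))⁻¹ = x ^ ((m : ℝ) ^ n)⁻¹ := by
  rw [← Real.rpow_natCast x m, ← Real.rpow_mul hx, pow_succ]
  congr 1
  field_simp

theorem rpow_inv_pow_lt_rpow_inv_pow_succ (hm : m ≠ 0) (hx : 0 ≤ x) (hxy : x ^ m < y) (n : ℕ) :
    x ^ ((m : ℝ) ^ n)⁻¹ < y ^ ((m : ℝ) ^ (n + 1))⁻¹ := by
  rw [← rpow_inv_pow_succ_of_pow hm hx]
  exact Real.rpow_lt_rpow (by positivity) hxy (by positivity)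

theorem rpow_inv_pow_succ_lt_rpow_inv_pow (hm : m ≠ 0) (hx : 0 ≤ x) (hy : 0 ≤ y)
    (hyx : y < x ^ m) (n : ℕ) :
    y ^ ((m : ℝ) ^ (n + 1))⁻¹ < x ^ ((m : ℝ) ^ n)⁻¹ := by
  rw [← rpow_inv_pow_succ_of_pow hm hx]
  exact Real.rpow_lt_rpow hy hyx (by positivity)

end Roots

theorem stmt_12 (m : ℕ) (hm : 2 ≤ m) (p : ℕ → ℕ)
    (hp : ∀ n : ℕ, 1 ≤ n → (p n).Prime)
    (hrec : ∀ n : ℕ, 1 ≤ n → (p n) ^ m < p (n + 1) ∧ p (n + 1) < (p n + 1) ^ m)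
    (A : ℝ)
    (hA : Filter.Tendsto (fun n : ℕ => (p n : ℝ) ^ (((m : ℝ) ^ n)⁻¹))
      Filter.atTop (nhds A)) :
    ∀ n : ℕ, 1 ≤ n →
      (p n : ℝ) ^ (((m : ℝ) ^ n)⁻¹) < A ∧
        A < ((p n : ℝ) + 1) ^ (((m : ℝ) ^ n)⁻¹) := by
  have hm0 : m ≠ 0 := by omega
  have hstep (k : ℕ) : p (k + 1) ^ m < p (k + 2) ∧ p (k + 2) + 1 < (p (k + 1) + 1) ^ m := by
    obtain ⟨hlow, hhigh⟩ := hrec (k + 1) le_add_self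
    exact ⟨hlow, (hp (k + 2) le_add_self).add_one_lt_add_one_pow (hp (k + 1) le_add_self).two_le
      ((Nat.le_self_pow hm0 _).trans_lt hlow) hhigh⟩
  have hα : StrictMono fun k => (p (k + 1) : ℝ) ^ ((m : ℝ) ^ (k + 1))⁻¹ :=
    strictMono_nat_of_lt_succ fun k =>
      rpow_inv_pow_lt_rpow_inv_pow_succ hm0 (by positivity) (by exact_mod_cast (hstep k).1) _
  have hβ : StrictAnti fun k => ((p (k + 1) : ℝ) + 1) ^ ((m : ℝ) ^ (k + 1))⁻¹ :=
    strictAnti_nat_of_succ_lt fun k =>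
      rpow_inv_pow_succ_lt_rpow_inv_pow hm0 (by positivity) (by positivity)
        (by exact_mod_cast (hstep k).2) _
  have hαβ (k : ℕ) : (p (k + 1) : ℝ) ^ ((m : ℝ) ^ (k + 1))⁻¹
      ≤ ((p (k + 1) : ℝ) + 1) ^ ((m : ℝ) ^ (k + 1))⁻¹ :=
    Real.rpow_le_rpow (by positivity) (by linarith) (by positivity)
  have hA' := (tendsto_add_atTop_iff_nat 1).2 hA
  intro n hn
  obtain ⟨k, rfl⟩ := Nat.exists_eq_add_of_le' hn
  exact ⟨hα.lt_of_tendsto hA' k, lt_of_tendsto_of_le_of_strictAnti hA' hαβ hβ k⟩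
end

section
/- Suppose that for every integer n ≥ 1 there is a prime strictly between n^2 and (n+1)^2 (Legendre's conjecture, strengthened to exclude the endpoint (n+1)^2 - 1 when it is composite, which holds for n ≥ 2 since n divides (n+1)^2 - 1). Then there exists a real constant A > 1 such that ⌊A^(2^n)⌋ is prime for all n ≥ 1. -/
/-!
Mills' construction. Starting from any prime `P 0 ≥ 2`, choose primes `P (n+1)` with
`P n ^ 2 < P (n+1)` and `P (n+1) + 1 < (P n + 1) ^ 2`. Then the intervals
`[P n ^ (1 / 2 ^ (n+1)), (P n + 1) ^ (1 / 2 ^ (n+1)))` are nested, with strictly decreasing right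
endpoints, so their lower endpoints have a supremum `A` lying in every one of them, which means
`⌊A ^ 2 ^ (n+1)⌋ = P n`. The strict upper bound is available because `(m+1)^2 - 1 = m (m+2)` is
composite for `m ≥ 2`, so the prime given by Legendre's conjecture stays below it.
-/

section MillsConstant

variable {m : ℕ}

noncomputable def millsRoot (m : ℕ) (u : ℕ → ℕ) (n : ℕ) : ℝ :=
  (u n : ℝ) ^ ((m ^ (n + 1) : ℕ) : ℝ)⁻¹

lemma millsRoot_nonneg (u : ℕ → ℕ) (n : ℕ) : 0 ≤ millsRoot m u n :=
  Real.rpow_nonneg (Nat.cast_nonneg _) _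

lemma millsRoot_pow (hm : m ≠ 0) (u : ℕ → ℕ) (n : ℕ) :
    millsRoot m u n ^ m ^ (n + 1) = u n :=
  Real.rpow_inv_natCast_pow (Nat.cast_nonneg _) (pow_ne_zero _ hm)

lemma millsRoot_pow_succ (hm : m ≠ 0) (u : ℕ → ℕ) (n : ℕ) :
    millsRoot m u n ^ m ^ (n + 2) = (u n : ℝ) ^ m := by
  rw [pow_succ m (n + 1), pow_mul, millsRoot_pow hm]

lemma millsRoot_lt_millsRoot {u v : ℕ → ℕ} {n : ℕ} (hm : m ≠ 0) (h : u n < v n) :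
    millsRoot m u n < millsRoot m v n := by
  rw [← pow_lt_pow_iff_left₀ (millsRoot_nonneg u n) (millsRoot_nonneg v n)
    (pow_ne_zero (n + 1) hm), millsRoot_pow hm, millsRoot_pow hm]
  exact_mod_cast h

lemma millsRoot_le_millsRoot_succ {u v : ℕ → ℕ} {n : ℕ} (hm : m ≠ 0)
    (h : u n ^ m ≤ v (n + 1)) : millsRoot m u n ≤ millsRoot m v (n + 1) := by
  rw [← pow_le_pow_iff_left₀ (millsRoot_nonneg u n) (millsRoot_nonneg v (n + 1))
    (pow_ne_zero (n + 2) hm), millsRoot_pow_succ hm, millsRoot_pow hm]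
  exact_mod_cast h

lemma millsRoot_succ_lt_millsRoot {u v : ℕ → ℕ} {n : ℕ} (hm : m ≠ 0)
    (h : v (n + 1) < u n ^ m) : millsRoot m v (n + 1) < millsRoot m u n := by
  rw [← pow_lt_pow_iff_left₀ (millsRoot_nonneg v (n + 1)) (millsRoot_nonneg u n)
    (pow_ne_zero (n + 2) hm), millsRoot_pow_succ hm, millsRoot_pow hm]
  exact_mod_cast h

theorem exists_floor_pow_pow_eq {P : ℕ → ℕ} (hlow : ∀ n, P n ^ m ≤ P (n + 1))
    (hhigh : ∀ n, P (n + 1) + 1 < (P n + 1) ^ m) :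
    ∃ A : ℝ, 0 ≤ A ∧ ∀ n, ⌊A ^ m ^ (n + 1)⌋ = P n := by
  have hm : m ≠ 0 := by
    rintro rfl
    simpa using hhigh 0
  set a := millsRoot m P
  set b := millsRoot m (P · + 1)
  have ha_mono : Monotone a :=
    monotone_nat_of_le_succ fun n => millsRoot_le_millsRoot_succ hm (hlow n)
  have hb_anti : StrictAnti b :=
    strictAnti_nat_of_succ_lt fun n => millsRoot_succ_lt_millsRoot hm (hhigh n)
  have hab : ∀ n k, a n < b k := by
    intro n k
    rcases le_total n k with hnk | hkn
    · exact (ha_mono hnk).trans_lt (millsRoot_lt_millsRoot hm (Nat.lt_succ_self (P k)))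
    · exact (millsRoot_lt_millsRoot hm (Nat.lt_succ_self (P n))).trans_le (hb_anti.antitone hkn)
  have hbdd : BddAbove (Set.range a) := ⟨b 0, by rintro _ ⟨n, rfl⟩; exact (hab n 0).le⟩
  have haA : ∀ n, a n ≤ ⨆ k, a k := le_ciSup hbdd
  have hAb : ∀ n, ⨆ k, a k < b n := fun n =>
    (ciSup_le fun k => (hab k (n + 1)).le).trans_lt (hb_anti (Nat.lt_succ_self n))
  refine ⟨⨆ k, a k, (millsRoot_nonneg P 0).trans (haA 0), fun n => ?_⟩
  rw [Int.floor_eq_iff]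
  constructor
  · calc ((P n : ℤ) : ℝ) = a n ^ m ^ (n + 1) := by rw [millsRoot_pow hm]; rfl
      _ ≤ _ := pow_le_pow_left₀ (millsRoot_nonneg P n) (haA n) _
  · calc (⨆ k, a k) ^ m ^ (n + 1) < b n ^ m ^ (n + 1) :=
          pow_lt_pow_left₀ (hAb n) ((millsRoot_nonneg P 0).trans (haA 0)) (pow_ne_zero _ hm)
      _ = ((P n : ℤ) : ℝ) + 1 := by rw [millsRoot_pow hm]; push_cast; rfl

end MillsConstant

lemma exists_prime_sq_lt_succ_lt_of_legendre
    (h : ∀ n : ℕ, 1 ≤ n → ∃ p : ℕ, p.Prime ∧ n ^ 2 < p ∧ p < (n + 1) ^ 2) {m : ℕ} (hm : 2 ≤ m) :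
    ∃ p : ℕ, p.Prime ∧ m ^ 2 < p ∧ p + 1 < (m + 1) ^ 2 := by
  obtain ⟨p, hp, hlo, hhi⟩ := h m (by omega)
  have hne : p ≠ m * (m + 2) := by
    rintro rfl
    exact Nat.not_prime_mul (by omega) (by omega) hp
  refine ⟨p, hp, hlo, ?_⟩
  have : (m + 1) ^ 2 = m * (m + 2) + 1 := by ring
  omega

theorem exists_prime_seq_sq_lt_succ_lt
    (hstep : ∀ m : ℕ, 2 ≤ m → ∃ p : ℕ, p.Prime ∧ m ^ 2 < p ∧ p + 1 < (m + 1) ^ 2) :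
    ∃ P : ℕ → ℕ, ∀ n, (P n).Prime ∧ P n ^ 2 < P (n + 1) ∧ P (n + 1) + 1 < (P n + 1) ^ 2 := by
  choose! g hg using hstep
  have htwo : ∀ n, 2 ≤ g^[n] 2 := by
    intro n
    induction n with
    | zero => rfl
    | succ n ih =>
      rw [Function.iterate_succ_apply']
      have := (hg _ ih).2.1
      nlinarith
  refine ⟨fun n => g^[n + 1] 2, fun n => ?_⟩
  refine ⟨?_, ?_⟩
  · simpa only [Function.iterate_succ_apply'] using (hg _ (htwo n)).1
  · simpa only [← Function.iterate_succ_apply' g (n + 1)] using (hg _ (htwo (n + 1))).2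

theorem stmt_14
    (h : ∀ n : ℕ, 1 ≤ n → ∃ p : ℕ, p.Prime ∧ n ^ 2 < p ∧ p < (n + 1) ^ 2) :
    ∃ A : ℝ, 1 < A ∧ ∀ n : ℕ, 1 ≤ n → Prime ⌊A ^ (2 ^ n : ℕ)⌋ := by
  obtain ⟨P, hP⟩ := exists_prime_seq_sq_lt_succ_lt fun m hm =>
    exists_prime_sq_lt_succ_lt_of_legendre h hm
  obtain ⟨A, hA0, hA⟩ := exists_floor_pow_pow_eq (fun n => (hP n).2.1.le) (fun n => (hP n).2.2)
  refine ⟨A, ?_, fun n hn => ?_⟩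
  · have hfloor : ⌊A ^ 2⌋ = P 0 := hA 0
    have hsq : (2 : ℝ) ≤ A ^ 2 := by
      exact_mod_cast Int.le_floor.mp (by rw [hfloor]; exact_mod_cast (hP 0).1.two_le)
    nlinarith
  · obtain ⟨k, rfl⟩ := Nat.exists_eq_add_of_le' hn
    rw [hA k]
    exact Nat.prime_iff_prime_int.mp (hP k).1
end
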